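/- arXiv:2402.09227 — 5 statements merged into one kernel-verified Lean document; each statement's English description precedes it below -/
import Mathlib

section
/- Let H be a complex Hilbert space with dim H ≥ 3 and let A ∈ B_s(H). The following assertions are equivalent: (1) A ∈ ℝI; (2) A^c = B_s(H); (3) A^# = B_s(H); (4) (B − A) ↔_c B for every B ∈ B_s(H); (5) (B − A) ↔_q B for every B ∈ B_s(H). -/
open scoped InnerProductSpace

noncomputable section

variable {H : Type*} [NormedAddCommGroup H] [InnerProductSpace ℂ H] [CompleteSpace H]

/-- `A ↔_c B`: the self-adjoint operators `A` and `B` commute. -/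
def CommC (A B : selfAdjoint (H →L[ℂ] H)) : Prop :=
  (A : H →L[ℂ] H) * (B : H →L[ℂ] H) = (B : H →L[ℂ] H) * (A : H →L[ℂ] H)

/-- `A ↔_q B`: the self-adjoint operators `A` and `B` quasi-commute, i.e.
they either commute or anti-commute. -/
def CommQ (A B : selfAdjoint (H →L[ℂ] H)) : Prop :=
  (A : H →L[ℂ] H) * (B : H →L[ℂ] H) = (B : H →L[ℂ] H) * (A : H →L[ℂ] H) ∨
  (A : H →L[ℂ] H) * (B : H →L[ℂ] H) + (B : H →L[ℂ] H) * (A : H →L[ℂ] H) = 0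

/-- rank-one orthogonal projection onto the span of `x`, as a CLM `H → H` -/
def Pr (x : H) : H →L[ℂ] H :=
  (ℂ ∙ x).subtypeL ∘L Submodule.orthogonalProjectionOnto (ℂ ∙ x)

lemma Pr_sa (x : H) : IsSelfAdjoint (Pr x) := isSelfAdjoint_starProjection _

lemma Pr_apply_self (x : H) : Pr x x = x := by
  have : (⟨x, Submodule.mem_span_singleton_self x⟩ : ℂ ∙ x) =
      Submodule.orthogonalProjectionOnto (ℂ ∙ x) x := by
    rw [Submodule.orthogonalProjectionOnto_mem_subspace_eq_self ⟨x, Submodule.mem_span_singleton_self x⟩]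
  simp [Pr, ← this]

lemma Pr_mem (x y : H) : Pr x y ∈ (ℂ ∙ x) := (Submodule.orthogonalProjectionOnto (ℂ ∙ x) y).2

lemma Pr_idem (x : H) : Pr x * Pr x = Pr x := by
  ext y
  show Pr x (Pr x y) = Pr x y
  exact Submodule.starProjection_eq_self_iff.mpr (Pr_mem x y)

/-- In any ring, if `P` is idempotent and anticommutes with `A`, it commutes with `A`. -/
lemma comm_of_anticomm {R : Type*} [Ring R] {P A : R} (hP : P * P = P)
    (h : P * A + A * P = 0) : A * P = P * A := by
  have h1 : P * A + P * (A * P) = 0 := by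
    have e : P * (P * A + A * P) = P * A + P * (A * P) := by
      rw [mul_add, ← mul_assoc, hP]
    rw [← e, h, mul_zero]
  have h2 : P * (A * P) + A * P = 0 := by
    have e : (P * A + A * P) * P = P * (A * P) + A * P := by
      rw [add_mul, mul_assoc, mul_assoc, hP]
    rw [← e, h, zero_mul]
  have e1 : P * A = -(P * (A * P)) := eq_neg_of_add_eq_zero_left h1
  have e2 : A * P = -(P * (A * P)) := eq_neg_of_add_eq_zero_right h2
  exact e2.trans e1.symm

/-- In any ring, if `P` is idempotent and `A*P + P*A = 2P²`, then `A` commutes with `P`. -/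
lemma comm_of_two {R : Type*} [Ring R] {P A : R} (hP : P * P = P)
    (h : A * P + P * A = P * P + P * P) : A * P = P * A := by
  have h' : A * P + P * A = P + P := by rwa [hP] at h
  have h1 : P * (A * P) + P * A = P + P := by
    have e : P * (A * P + P * A) = P * (A * P) + P * A := by
      rw [mul_add, ← mul_assoc P P A, hP]
    have e2 : P * (P + P) = P + P := by rw [mul_add, hP]
    rw [← e, h', e2]
  have h2 : A * P + P * (A * P) = P + P := by
    have e : (A * P + P * A) * P = A * P + P * (A * P) := by
      rw [add_mul, mul_assoc A P P, hP, mul_assoc]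
    have e2 : (P + P) * P = P + P := by rw [add_mul, hP]
    rw [← e, h', e2]
  have e1 : P * A = (P + P) - P * (A * P) := eq_sub_of_add_eq' h1
  have e2 : A * P = (P + P) - P * (A * P) := eq_sub_of_add_eq h2
  exact e2.trans e1.symm

/-- If `A` commutes with every rank-one projection, every vector is an eigenvector. -/
lemma eig_of_comm (A : H →L[ℂ] H) (h : ∀ x : H, A * Pr x = Pr x * A) (x : H) :
    ∃ c : ℂ, A x = c • x := by
  rcases eq_or_ne x 0 with rfl | hx
  · exact ⟨0, by simp⟩
  · have hmem : A x ∈ (ℂ ∙ x) := by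
      have h2 : A (Pr x x) = Pr x (A x) := by
        calc A (Pr x x) = (A * Pr x) x := rfl
          _ = (Pr x * A) x := by rw [h x]
          _ = Pr x (A x) := rfl
      rw [Pr_apply_self] at h2
      rw [h2]
      exact Pr_mem x (A x)
    rcases Submodule.mem_span_singleton.mp hmem with ⟨c, hc⟩
    exact ⟨c, hc.symm⟩

/-- A self-adjoint operator for which every vector is an eigenvector is a real scalar. -/
lemma scalar_of_eig [Nontrivial H] (A : H →L[ℂ] H) (hA : IsSelfAdjoint A)
    (h : ∀ x : H, ∃ c : ℂ, A x = c • x) : ∃ r : ℝ, A = (r : ℂ) • 1 := by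
  obtain ⟨x₀, hx₀⟩ := exists_ne (0 : H)
  obtain ⟨c₀, hc₀⟩ := h x₀
  have key : ∀ y : H, A y = c₀ • y := by
    intro y
    by_cases hy : y ∈ (ℂ ∙ x₀)
    · rcases Submodule.mem_span_singleton.mp hy with ⟨a, rfl⟩
      rw [map_smul, hc₀, smul_comm]
    · obtain ⟨cy, hcy⟩ := h y
      obtain ⟨c', hc'⟩ := h (x₀ + y)
      rw [map_add, hc₀, hcy, smul_add] at hc'
      have hsep : (c₀ - c') • x₀ = (c' - cy) • y := by
        calc (c₀ - c') • x₀ = (c₀ • x₀ + cy • y) - c' • x₀ - cy • y := by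
              rw [sub_smul]; abel
          _ = (c' • x₀ + c' • y) - c' • x₀ - cy • y := by rw [hc']
          _ = (c' - cy) • y := by rw [sub_smul]; abel
      have hcc : c' = cy := by
        by_contra hne
        apply hy
        have hyx : y = (c' - cy)⁻¹ • (c₀ - c') • x₀ := by
          rw [hsep, smul_smul, inv_mul_cancel₀ (sub_ne_zero.mpr hne), one_smul]
        rw [hyx]
        exact Submodule.smul_mem _ _
          (Submodule.smul_mem _ _ (Submodule.mem_span_singleton_self x₀))
      have h0 : (c₀ - c') • x₀ = 0 := by rw [hsep, hcc, sub_self, zero_smul]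
      have hc0c' : c₀ = c' := by
        rcases smul_eq_zero.mp h0 with h | h
        · exact sub_eq_zero.mp h
        · exact absurd h hx₀
      rw [hcy, ← hcc, ← hc0c']
  have hre : (starRingEnd ℂ) c₀ = c₀ := by
    have h1 : ⟪A x₀, x₀⟫_ℂ = ⟪x₀, A x₀⟫_ℂ := hA.isSymmetric x₀ x₀
    rw [hc₀, inner_smul_left, inner_smul_right] at h1
    have hxx : ⟪x₀, x₀⟫_ℂ ≠ 0 := by
      simpa [inner_self_eq_zero] using hx₀
    exact mul_right_cancel₀ hxx h1
  refine ⟨c₀.re, ?_⟩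
  have hc : (c₀.re : ℂ) = c₀ := Complex.conj_eq_iff_re.mp hre
  ext y
  simp [key y, hc]

theorem stmt4
    (hdim : 3 ≤ Module.rank ℂ H)
    (A : selfAdjoint (H →L[ℂ] H)) :
    List.TFAE
      [ (∃ r : ℝ, (A : H →L[ℂ] H) = (r : ℂ) • 1),
        {X : selfAdjoint (H →L[ℂ] H) | CommC X A} = Set.univ,
        {X : selfAdjoint (H →L[ℂ] H) | CommQ X A} = Set.univ,
        (∀ B : selfAdjoint (H →L[ℂ] H), CommC (B - A) B),
        (∀ B : selfAdjoint (H →L[ℂ] H), CommQ (B - A) B) ] := by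
  have hnt : Nontrivial H :=
    rank_pos_iff_nontrivial.mp (lt_of_lt_of_le (by norm_num) hdim)
  have hAsa : IsSelfAdjoint (A : H →L[ℂ] H) := A.2
  tfae_have 1 → 2 := by
    rintro ⟨r, hr⟩
    apply Set.eq_univ_of_forall
    intro X
    show (X : H →L[ℂ] H) * A = (A : H →L[ℂ] H) * X
    rw [hr, mul_smul_comm, smul_mul_assoc, one_mul, mul_one]
  tfae_have 2 → 3 := by
    intro h
    apply Set.eq_univ_of_forall
    intro X
    exact Or.inl (Set.eq_univ_iff_forall.mp h X)
  tfae_have 3 → 1 := by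
    intro h
    apply scalar_of_eig (A : H →L[ℂ] H) hAsa (eig_of_comm _ ?_)
    intro x
    rcases Set.eq_univ_iff_forall.mp h ⟨Pr x, Pr_sa x⟩ with h1 | h2
    · exact h1.symm
    · exact comm_of_anticomm (Pr_idem x) h2
  tfae_have 2 → 4 := by
    intro h B
    have hB : (B : H →L[ℂ] H) * A = (A : H →L[ℂ] H) * B :=
      Set.eq_univ_iff_forall.mp h B
    show ((B - A : selfAdjoint (H →L[ℂ] H)) : H →L[ℂ] H) * B =
      (B : H →L[ℂ] H) * ((B - A : selfAdjoint (H →L[ℂ] H)) : H →L[ℂ] H)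
    rw [AddSubgroup.coe_sub, sub_mul, mul_sub, hB]
  tfae_have 4 → 5 := fun h B => Or.inl (h B)
  tfae_have 5 → 1 := by
    intro h
    apply scalar_of_eig (A : H →L[ℂ] H) hAsa (eig_of_comm _ ?_)
    intro x
    set P : H →L[ℂ] H := Pr x with hPdef
    have hx := h ⟨P, Pr_sa x⟩
    set Aop : H →L[ℂ] H := (A : H →L[ℂ] H) with hAdef
    rcases hx with h1 | h2
    · rw [AddSubgroup.coe_sub] at h1
      have h1' : P * P - Aop * P = P * P - P * Aop := by
        rw [← sub_mul, ← mul_sub]; exact h1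
      calc Aop * P = P * P - (P * P - Aop * P) := (sub_sub_cancel _ _).symm
        _ = P * P - (P * P - P * Aop) := by rw [h1']
        _ = P * Aop := sub_sub_cancel _ _
    · rw [AddSubgroup.coe_sub, sub_mul, mul_sub] at h2
      have h2' : Aop * P + P * Aop = P * P + P * P := by
        have e : (P * P + P * P) - (Aop * P + P * Aop) = 0 := by
          rw [← h2]; abel
        exact (sub_eq_zero.mp e).symm
      exact comm_of_two (Pr_idem x) h2'
  tfae_finish
end
end

section
/- Let H be a complex Hilbert space, let H₀ be a two-dimensional closed subspace of H with orthonormal basis {e₁, e₂}, let a be a nonzero real number, and set λ = √(1 + a²). Define self-adjoint operators A, E, F ∈ B_s(H) by: A e₁ = −a e₁ + e₂, A e₂ = e₁ + a e₂, A x = λ x for x ∈ H₀^⊥; E e₁ = −a e₁, E e₂ = a e₂, E x = a x for x ∈ H₀^⊥; F e₁ = e₂, F e₂ = e₁, F x = x for x ∈ H₀^⊥. Then σ(A) = {λ, −λ}, σ(E) = {a, −a}, σ(F) = {1, −1}; there are uniquely determined rank-one orthogonal projections P, Q, R with A = λ(I − 2P), E = a(I − 2Q), F = I − 2R; and for all nonzero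 real numbers α, ε, φ: (αA − εE) commutes with F if and only if α = ε; (αA − φF) commutes with E if and only if α = φ; (αA − εE)F + F(αA − εE) ≠ 0; and (αA − φF)E + E(αA − φF) ≠ 0. -/
set_option linter.unusedSectionVars false
set_option maxHeartbeats 1000000

noncomputable section

variable {H : Type*} [NormedAddCommGroup H] [InnerProductSpace ℂ H] [CompleteSpace H]

/-- A rank-one orthogonal projection on `H`. -/
def IsRankOneProjection (P : H →L[ℂ] H) : Prop :=
  IsSelfAdjoint P ∧ IsIdempotentElem P ∧
    Module.finrank ℂ (LinearMap.range (P : H →ₗ[ℂ] H)) = 1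

lemma not_unit_ker (T : H →L[ℂ] H) (v : H) (hv : v ≠ 0) (hTv : T v = 0) : ¬ IsUnit T := by
  rintro ⟨u, rfl⟩
  apply hv
  have h1 : ((↑u⁻¹ * ↑u : H →L[ℂ] H)) v = v := by rw [u.inv_mul]; simp
  rw [ContinuousLinearMap.mul_apply, hTv, map_zero] at h1
  exact h1.symm

lemma spectrum_of_sq (T : H →L[ℂ] H) (c : ℂ) (hT : T * T = (c ^ 2) • 1)
    (v w : H) (hv : v ≠ 0) (hw : w ≠ 0) (hTv : T v = c • v) (hTw : T w = (-c) • w) :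
    spectrum ℂ T = {c, -c} := by
  have key : ∀ z : ℂ, (algebraMap ℂ (H →L[ℂ] H) z - T) * (algebraMap ℂ (H →L[ℂ] H) z + T)
      = (z ^ 2 - c ^ 2) • 1 := by
    intro z
    rw [Algebra.algebraMap_eq_smul_one]
    simp only [sub_mul, mul_add, smul_mul_assoc, mul_smul_comm, one_mul, mul_one, hT]
    module
  have key2 : ∀ z : ℂ, (algebraMap ℂ (H →L[ℂ] H) z + T) * (algebraMap ℂ (H →L[ℂ] H) z - T)
      = (z ^ 2 - c ^ 2) • 1 := by
    intro z
    rw [Algebra.algebraMap_eq_smul_one]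
    simp only [add_mul, mul_sub, smul_mul_assoc, mul_smul_comm, one_mul, mul_one, hT]
    module
  ext z
  simp only [Set.mem_insert_iff, Set.mem_singleton_iff, spectrum.mem_iff]
  constructor
  · intro h
    by_contra hz
    push_neg at hz
    apply h
    have hz2 : z ^ 2 - c ^ 2 ≠ 0 := by
      intro h0
      have : (z - c) * (z + c) = 0 := by linear_combination h0
      rcases mul_eq_zero.mp this with h1 | h1
      · exact hz.1 (by linear_combination h1)
      · exact hz.2 (by linear_combination h1)
    refine ⟨⟨algebraMap ℂ (H →L[ℂ] H) z - T,
      (z ^ 2 - c ^ 2)⁻¹ • (algebraMap ℂ (H →L[ℂ] H) z + T), ?_, ?_⟩, rfl⟩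
    · rw [mul_smul_comm, key, smul_smul, inv_mul_cancel₀ hz2, one_smul]
    · rw [smul_mul_assoc, key2, smul_smul, inv_mul_cancel₀ hz2, one_smul]
  · rintro (rfl | rfl)
    · refine not_unit_ker _ v hv ?_
      rw [ContinuousLinearMap.sub_apply, hTv, Algebra.algebraMap_eq_smul_one,
        ContinuousLinearMap.smul_apply, ContinuousLinearMap.one_apply, sub_self]
    · refine not_unit_ker _ w hw ?_
      rw [ContinuousLinearMap.sub_apply, hTw, Algebra.algebraMap_eq_smul_one,
        ContinuousLinearMap.smul_apply, ContinuousLinearMap.one_apply, neg_smul, sub_neg_eq_add,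
        neg_add_cancel]

lemma proj_helper (T : H →L[ℂ] H) (c : ℝ) (hc : c ≠ 0) (hTsa : IsSelfAdjoint T)
    (hT : T * T = ((c : ℂ) ^ 2) • 1)
    (w : H) (hw : w ≠ 0) (hTw : T w = (-(c : ℂ)) • w)
    (hrange : ∀ x : H, ∃ t : ℂ, x - (c : ℂ)⁻¹ • T x = t • w) :
    ∃! P : H →L[ℂ] H, IsRankOneProjection P ∧
      T = (c : ℂ) • ((1 : H →L[ℂ] H) - (2 : ℂ) • P) := by
  have hc' : (c : ℂ) ≠ 0 := by exact_mod_cast hc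
  set P : H →L[ℂ] H := (2 : ℂ)⁻¹ • ((1 : H →L[ℂ] H) - (c : ℂ)⁻¹ • T) with hP
  have hPapp : ∀ x : H, P x = (2 : ℂ)⁻¹ • (x - (c : ℂ)⁻¹ • T x) := by
    intro x
    simp [hP, ContinuousLinearMap.smul_apply, ContinuousLinearMap.sub_apply]
  have hPw : P w = w := by
    rw [hPapp, hTw, smul_smul]
    field_simp
    module
  have hrange' : LinearMap.range (P : H →ₗ[ℂ] H) = Submodule.span ℂ {w} := by
    apply le_antisymm
    · rintro x ⟨y, rfl⟩
      obtain ⟨t, ht⟩ := hrange y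
      have : (P : H →ₗ[ℂ] H) y = ((2 : ℂ)⁻¹ * t) • w := by
        simp only [ContinuousLinearMap.coe_coe]
        rw [hPapp, ht, smul_smul]
      rw [this]
      exact Submodule.smul_mem _ _ (Submodule.mem_span_singleton_self w)
    · rw [Submodule.span_singleton_le_iff_mem]
      exact ⟨w, hPw⟩
  refine ⟨P, ⟨⟨?_, ?_, ?_⟩, ?_⟩, ?_⟩
  · have h1 : IsSelfAdjoint ((c : ℂ)⁻¹) := by
      rw [isSelfAdjoint_iff, star_inv₀, Complex.star_def, Complex.conj_ofReal]
    have h2 : IsSelfAdjoint ((2 : ℂ)⁻¹) := by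
      rw [isSelfAdjoint_iff, star_inv₀]; simp
    have h3 : IsSelfAdjoint ((1 : H →L[ℂ] H)) := IsSelfAdjoint.one _
    exact h2.smul (h3.sub (h1.smul hTsa))
  · show P * P = P
    rw [hP]
    simp only [smul_mul_assoc, mul_smul_comm, sub_mul, mul_sub, one_mul, mul_one, hT]
    match_scalars
    · rw [show ((c : ℂ))⁻¹ * ((c : ℂ) ^ 2 * 1) = (c : ℂ) from by
        rw [mul_one, sq, ← mul_assoc, inv_mul_cancel₀ hc', one_mul]]
      ring_nf
      rw [mul_inv_cancel₀ hc']
      norm_num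
    · ring
  · rw [hrange']
    exact finrank_span_singleton hw
  · rw [hP]
    match_scalars <;> field_simp <;> ring_nf
  · rintro P' ⟨-, hP'⟩
    have h2 : ((2 : ℂ) * c) • P' = (c : ℂ) • (1 : H →L[ℂ] H) - T := by
      rw [hP']; module
    apply smul_right_injective (H →L[ℂ] H) (show (2 : ℂ) * c ≠ 0 by simp [hc'])
    show ((2 : ℂ) * c) • P' = ((2 : ℂ) * c) • P
    rw [h2, hP]
    match_scalars <;> field_simp <;> ring

theorem stmt6
    (H₀ : Submodule ℂ H) (e₁ e₂ : H)
    (he₁ : e₁ ∈ H₀) (he₂ : e₂ ∈ H₀)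
    (hne₁ : ‖e₁‖ = 1) (hne₂ : ‖e₂‖ = 1)
    (horth : (inner ℂ e₁ e₂ : ℂ) = 0)
    (hspan : H₀ = Submodule.span ℂ {e₁, e₂})
    (a : ℝ) (ha : a ≠ 0)
    (l : ℝ) (hl : l = Real.sqrt (1 + a ^ 2))
    (A E F : H →L[ℂ] H)
    (hAsa : IsSelfAdjoint A) (hEsa : IsSelfAdjoint E) (hFsa : IsSelfAdjoint F)
    (hAe₁ : A e₁ = (-(a : ℂ)) • e₁ + e₂) (hAe₂ : A e₂ = e₁ + (a : ℂ) • e₂)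
    (hAperp : ∀ x ∈ H₀ᗮ, A x = (l : ℂ) • x)
    (hEe₁ : E e₁ = (-(a : ℂ)) • e₁) (hEe₂ : E e₂ = (a : ℂ) • e₂)
    (hEperp : ∀ x ∈ H₀ᗮ, E x = (a : ℂ) • x)
    (hFe₁ : F e₁ = e₂) (hFe₂ : F e₂ = e₁)
    (hFperp : ∀ x ∈ H₀ᗮ, F x = x) :
    spectrum ℂ A = {(l : ℂ), (-l : ℂ)} ∧
    spectrum ℂ E = {(a : ℂ), (-a : ℂ)} ∧
    spectrum ℂ F = {(1 : ℂ), (-1 : ℂ)} ∧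
    (∃! P : H →L[ℂ] H, IsRankOneProjection P ∧
        A = (l : ℂ) • ((1 : H →L[ℂ] H) - (2 : ℂ) • P)) ∧
    (∃! Q : H →L[ℂ] H, IsRankOneProjection Q ∧
        E = (a : ℂ) • ((1 : H →L[ℂ] H) - (2 : ℂ) • Q)) ∧
    (∃! R : H →L[ℂ] H, IsRankOneProjection R ∧
        F = (1 : H →L[ℂ] H) - (2 : ℂ) • R) ∧
    (∀ α ε : ℝ, α ≠ 0 → ε ≠ 0 →
      ((((α : ℂ) • A - (ε : ℂ) • E) * F = F * ((α : ℂ) • A - (ε : ℂ) • E)) ↔ α = ε)) ∧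
    (∀ α φ : ℝ, α ≠ 0 → φ ≠ 0 →
      ((((α : ℂ) • A - (φ : ℂ) • F) * E = E * ((α : ℂ) • A - (φ : ℂ) • F)) ↔ α = φ)) ∧
    (∀ α ε : ℝ, α ≠ 0 → ε ≠ 0 →
      ((α : ℂ) • A - (ε : ℂ) • E) * F + F * ((α : ℂ) • A - (ε : ℂ) • E) ≠ 0) ∧
    (∀ α φ : ℝ, α ≠ 0 → φ ≠ 0 →
      ((α : ℂ) • A - (φ : ℂ) • F) * E + E * ((α : ℂ) • A - (φ : ℂ) • F) ≠ 0) := by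
  have hlpos : 0 < l := by rw [hl]; positivity
  have hl0 : l ≠ 0 := ne_of_gt hlpos
  have ha' : (a : ℂ) ≠ 0 := by exact_mod_cast ha
  have hl' : (l : ℂ) ≠ 0 := by exact_mod_cast hl0
  have hl2 : l ^ 2 = 1 + a ^ 2 := by rw [hl]; exact Real.sq_sqrt (by positivity)
  have hl2c : (l : ℂ) ^ 2 = 1 + (a : ℂ) ^ 2 := by exact_mod_cast congrArg (Complex.ofReal) hl2
  have i11 : (inner ℂ e₁ e₁ : ℂ) = 1 := by
    rw [inner_self_eq_norm_sq_to_K, hne₁]; norm_num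
  have i22 : (inner ℂ e₂ e₂ : ℂ) = 1 := by
    rw [inner_self_eq_norm_sq_to_K, hne₂]; norm_num
  have i21 : (inner ℂ e₂ e₁ : ℂ) = 0 := by
    rw [← inner_conj_symm, horth, map_zero]
  have he₁0 : e₁ ≠ 0 := by intro h; rw [h, norm_zero] at hne₁; norm_num at hne₁
  have he₂0 : e₂ ≠ 0 := by intro h; rw [h, norm_zero] at hne₂; norm_num at hne₂
  have hnz : ∀ c₂ : ℂ, e₁ + c₂ • e₂ ≠ 0 := by
    intro c₂ h
    have h1 : (inner ℂ e₁ (e₁ + c₂ • e₂) : ℂ) = 1 := by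
      rw [inner_add_right, inner_smul_right, i11, horth]; ring
    rw [h, inner_zero_right] at h1
    norm_num at h1
  have hdec : ∀ x : H, ∃ c₁ c₂ : ℂ, ∃ y ∈ H₀ᗮ, x = c₁ • e₁ + c₂ • e₂ + y := by
    intro x
    refine ⟨inner ℂ e₁ x, inner ℂ e₂ x, x - (inner ℂ e₁ x : ℂ) • e₁ - (inner ℂ e₂ x : ℂ) • e₂, ?_,
      by abel⟩
    rw [hspan, Submodule.mem_orthogonal]
    intro u hu
    induction hu using Submodule.span_induction with
    | mem z hz =>
      rcases Set.mem_insert_iff.mp hz with rfl | hz2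
      · rw [inner_sub_right, inner_sub_right, inner_smul_right, inner_smul_right, i11, horth]
        ring
      · rw [Set.mem_singleton_iff.mp hz2, inner_sub_right, inner_sub_right, inner_smul_right,
          inner_smul_right, i21, i22]
        ring
    | zero => simp
    | add z w _ _ ihz ihw => rw [inner_add_left, ihz, ihw, add_zero]
    | smul t z _ ihz => rw [inner_smul_left, ihz, mul_zero]
  have hExt : ∀ S T : H →L[ℂ] H, S e₁ = T e₁ → S e₂ = T e₂ →
      (∀ y ∈ H₀ᗮ, S y = T y) → S = T := by
    intro S T h1 h2 h3
    ext x
    obtain ⟨c₁, c₂, y, hy, rfl⟩ := hdec x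
    simp only [map_add, map_smul, h1, h2, h3 y hy]
  -- squares
  have hAA : A * A = ((l : ℂ) ^ 2) • (1 : H →L[ℂ] H) := by
    apply hExt
    · rw [ContinuousLinearMap.mul_apply, hAe₁, map_add, map_smul, hAe₁, hAe₂,
        ContinuousLinearMap.smul_apply, ContinuousLinearMap.one_apply]
      match_scalars
      · linear_combination -hl2c
      · ring
    · rw [ContinuousLinearMap.mul_apply, hAe₂, map_add, map_smul, hAe₁, hAe₂,
        ContinuousLinearMap.smul_apply, ContinuousLinearMap.one_apply]
      match_scalars
      · ring
      · linear_combination -hl2c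
    · intro y hy
      rw [ContinuousLinearMap.mul_apply, hAperp y hy, map_smul, hAperp y hy, smul_smul,
        ContinuousLinearMap.smul_apply, ContinuousLinearMap.one_apply, ← sq]
  have hEE : E * E = ((a : ℂ) ^ 2) • (1 : H →L[ℂ] H) := by
    apply hExt
    · rw [ContinuousLinearMap.mul_apply, hEe₁, map_smul, hEe₁,
        ContinuousLinearMap.smul_apply, ContinuousLinearMap.one_apply]
      match_scalars; ring
    · rw [ContinuousLinearMap.mul_apply, hEe₂, map_smul, hEe₂,
        ContinuousLinearMap.smul_apply, ContinuousLinearMap.one_apply]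
      match_scalars; ring
    · intro y hy
      rw [ContinuousLinearMap.mul_apply, hEperp y hy, map_smul, hEperp y hy, smul_smul,
        ContinuousLinearMap.smul_apply, ContinuousLinearMap.one_apply, ← sq]
  have hFF : F * F = ((1 : ℂ) ^ 2) • (1 : H →L[ℂ] H) := by
    apply hExt
    · rw [ContinuousLinearMap.mul_apply, hFe₁, hFe₂]
      simp
    · rw [ContinuousLinearMap.mul_apply, hFe₂, hFe₁]
      simp
    · intro y hy
      rw [ContinuousLinearMap.mul_apply, hFperp y hy, hFperp y hy]
      simp
  -- eigenvectors of A
  have hAv : A (e₁ + ((a : ℂ) + l) • e₂) = (l : ℂ) • (e₁ + ((a : ℂ) + l) • e₂) := by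
    rw [map_add, map_smul, hAe₁, hAe₂]
    match_scalars
    · ring
    · linear_combination -hl2c
  have hAw : A (e₁ + ((a : ℂ) - l) • e₂) = (-(l : ℂ)) • (e₁ + ((a : ℂ) - l) • e₂) := by
    rw [map_add, map_smul, hAe₁, hAe₂]
    match_scalars
    · ring
    · linear_combination -hl2c
  -- eigenvectors of F
  have hFv : F (e₁ + e₂) = (1 : ℂ) • (e₁ + e₂) := by
    rw [map_add, hFe₁, hFe₂, one_smul, add_comm]
  have hFw : F (e₁ - e₂) = (-(1 : ℂ)) • (e₁ - e₂) := by
    rw [map_sub, hFe₁, hFe₂]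
    module
  have hsub0 : e₁ - e₂ ≠ 0 := by
    have := hnz (-1)
    simpa [neg_smul, one_smul, ← sub_eq_add_neg] using this
  have hadd0 : e₁ + e₂ ≠ 0 := by
    have := hnz 1
    simpa [one_smul] using this
  -- ranges
  have hrangeA : ∀ x : H, ∃ t : ℂ, x - (l : ℂ)⁻¹ • A x = t • (e₁ + ((a : ℂ) - l) • e₂) := by
    intro x
    obtain ⟨c₁, c₂, y, hy, rfl⟩ := hdec x
    refine ⟨(c₁ * ((l : ℂ) + a) - c₂) / l, ?_⟩
    rw [map_add, map_add, map_smul, map_smul, hAe₁, hAe₂, hAperp y hy]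
    match_scalars
    · field_simp
      ring
    · field_simp
      ring_nf
      linear_combination c₁ * hl2c
    · field_simp
      ring
  have hrangeE : ∀ x : H, ∃ t : ℂ, x - (a : ℂ)⁻¹ • E x = t • e₁ := by
    intro x
    obtain ⟨c₁, c₂, y, hy, rfl⟩ := hdec x
    refine ⟨2 * c₁, ?_⟩
    rw [map_add, map_add, map_smul, map_smul, hEe₁, hEe₂, hEperp y hy]
    match_scalars <;> field_simp <;> ring
  have hrangeF : ∀ x : H, ∃ t : ℂ, x - ((1 : ℝ) : ℂ)⁻¹ • F x = t • (e₁ - e₂) := by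
    intro x
    obtain ⟨c₁, c₂, y, hy, rfl⟩ := hdec x
    refine ⟨c₁ - c₂, ?_⟩
    rw [map_add, map_add, map_smul, map_smul, hFe₁, hFe₂, hFperp y hy]
    match_scalars <;> field_simp <;> ring
  refine ⟨?_, ?_, ?_, ?_, ?_, ?_, ?_, ?_, ?_, ?_⟩
  · exact spectrum_of_sq A (l : ℂ) hAA _ _ (hnz _) (hnz _) hAv hAw
  · exact spectrum_of_sq E (a : ℂ) hEE e₂ e₁ he₂0 he₁0 hEe₂ hEe₁
  · exact spectrum_of_sq F 1 hFF (e₁ + e₂) (e₁ - e₂) hadd0 hsub0 hFv hFw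
  · exact proj_helper A l hl0 hAsa hAA _ (hnz _) hAw hrangeA
  · exact proj_helper E a ha hEsa hEE e₁ he₁0 hEe₁ hrangeE
  · have h := proj_helper F 1 one_ne_zero hFsa
      (by rw [Complex.ofReal_one]; exact hFF) (e₁ - e₂) hsub0
      (by rw [Complex.ofReal_one]; exact hFw) hrangeF
    simpa only [Complex.ofReal_one, one_smul] using h
  · -- iff 1
    intro α ε hα hε
    constructor
    · intro h
      have h1 : (((α : ℂ) • A - (ε : ℂ) • E) * F) e₁ = (F * ((α : ℂ) • A - (ε : ℂ) • E)) e₁ := by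
        rw [h]
      have h2 : ((2 * (a : ℂ) * ((α : ℂ) - (ε : ℂ))) • e₂)
          = (((α : ℂ) • A - (ε : ℂ) • E) * F) e₁ - (F * ((α : ℂ) • A - (ε : ℂ) • E)) e₁ := by
        simp only [ContinuousLinearMap.mul_apply, ContinuousLinearMap.sub_apply,
          ContinuousLinearMap.smul_apply, hFe₁, hAe₁, hAe₂, hEe₁, hEe₂, map_sub, map_smul,
          map_add, hFe₂]
        module
      rw [h1, sub_self] at h2
      rcases smul_eq_zero.mp h2 with h3 | h3
      · have h4 : (α : ℂ) - (ε : ℂ) = 0 := by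
          rcases mul_eq_zero.mp h3 with h5 | h5
          · rcases mul_eq_zero.mp h5 with h6 | h6
            · norm_num at h6
            · exact absurd h6 ha'
          · exact h5
        have : (α : ℂ) = (ε : ℂ) := sub_eq_zero.mp h4
        exact_mod_cast this
      · exact absurd h3 he₂0
    · rintro rfl
      apply hExt
      · simp only [ContinuousLinearMap.mul_apply, ContinuousLinearMap.sub_apply,
          ContinuousLinearMap.smul_apply, hFe₁, hAe₁, hAe₂, hEe₁, hEe₂, map_sub, map_smul,
          map_add, hFe₂]
        module
      · simp only [ContinuousLinearMap.mul_apply, ContinuousLinearMap.sub_apply,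
          ContinuousLinearMap.smul_apply, hFe₁, hAe₁, hAe₂, hEe₁, hEe₂, map_sub, map_smul,
          map_add, hFe₂]
        module
      · intro y hy
        have e1 : ((α : ℂ) • A - (α : ℂ) • E) y = ((α : ℂ) * l - (α : ℂ) * a) • y := by
          simp only [ContinuousLinearMap.sub_apply, ContinuousLinearMap.smul_apply,
            hAperp y hy, hEperp y hy, smul_smul]
          module
        rw [ContinuousLinearMap.mul_apply, ContinuousLinearMap.mul_apply, hFperp y hy, e1,
          map_smul, hFperp y hy]
  · -- iff 2
    intro α φ hα hφ
    constructor
    · intro h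
      have h1 : (((α : ℂ) • A - (φ : ℂ) • F) * E) e₁ = (E * ((α : ℂ) • A - (φ : ℂ) • F)) e₁ := by
        rw [h]
      have h2 : ((2 * (a : ℂ) * ((φ : ℂ) - (α : ℂ))) • e₂)
          = (((α : ℂ) • A - (φ : ℂ) • F) * E) e₁ - (E * ((α : ℂ) • A - (φ : ℂ) • F)) e₁ := by
        simp only [ContinuousLinearMap.mul_apply, ContinuousLinearMap.sub_apply,
          ContinuousLinearMap.smul_apply, hFe₁, hAe₁, hAe₂, hEe₁, hEe₂, map_sub, map_smul,
          map_add, hFe₂]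
        module
      rw [h1, sub_self] at h2
      rcases smul_eq_zero.mp h2 with h3 | h3
      · have h4 : (φ : ℂ) - (α : ℂ) = 0 := by
          rcases mul_eq_zero.mp h3 with h5 | h5
          · rcases mul_eq_zero.mp h5 with h6 | h6
            · norm_num at h6
            · exact absurd h6 ha'
          · exact h5
        have : (α : ℂ) = (φ : ℂ) := (sub_eq_zero.mp h4).symm
        exact_mod_cast this
      · exact absurd h3 he₂0
    · rintro rfl
      apply hExt
      · simp only [ContinuousLinearMap.mul_apply, ContinuousLinearMap.sub_apply,
          ContinuousLinearMap.smul_apply, hFe₁, hAe₁, hAe₂, hEe₁, hEe₂, map_sub, map_smul,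
          map_add, hFe₂]
        module
      · simp only [ContinuousLinearMap.mul_apply, ContinuousLinearMap.sub_apply,
          ContinuousLinearMap.smul_apply, hFe₁, hAe₁, hAe₂, hEe₁, hEe₂, map_sub, map_smul,
          map_add, hFe₂]
        module
      · intro y hy
        have e1 : ((α : ℂ) • A - (α : ℂ) • F) y = ((α : ℂ) * l - (α : ℂ)) • y := by
          simp only [ContinuousLinearMap.sub_apply, ContinuousLinearMap.smul_apply,
            hAperp y hy, hFperp y hy, smul_smul]
          module
        rw [ContinuousLinearMap.mul_apply, ContinuousLinearMap.mul_apply, hEperp y hy,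
          map_smul, e1, map_smul, hEperp y hy, smul_smul, smul_smul, mul_comm]
  · -- anticommutator 1
    intro α ε hα hε h
    have h1 : (((α : ℂ) • A - (ε : ℂ) • E) * F + F * ((α : ℂ) • A - (ε : ℂ) • E)) e₁ = 0 := by
      rw [h]; rfl
    have h2 : (((α : ℂ) • A - (ε : ℂ) • E) * F + F * ((α : ℂ) • A - (ε : ℂ) • E)) e₁
        = (2 * (α : ℂ)) • e₁ := by
      simp only [ContinuousLinearMap.add_apply, ContinuousLinearMap.mul_apply,
        ContinuousLinearMap.sub_apply, ContinuousLinearMap.smul_apply, hFe₁, hAe₁, hAe₂,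
        hEe₁, hEe₂, map_sub, map_smul, map_add, hFe₂]
      module
    rw [h1] at h2
    rcases smul_eq_zero.mp h2.symm with h3 | h3
    · rcases mul_eq_zero.mp h3 with h4 | h4
      · norm_num at h4
      · exact hα (by exact_mod_cast h4)
    · exact he₁0 h3
  · -- anticommutator 2
    intro α φ hα hφ h
    have h1 : (((α : ℂ) • A - (φ : ℂ) • F) * E + E * ((α : ℂ) • A - (φ : ℂ) • F)) e₁ = 0 := by
      rw [h]; rfl
    have h2 : (((α : ℂ) • A - (φ : ℂ) • F) * E + E * ((α : ℂ) • A - (φ : ℂ) • F)) e₁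
        = (2 * (α : ℂ) * (a : ℂ) ^ 2) • e₁ := by
      simp only [ContinuousLinearMap.add_apply, ContinuousLinearMap.mul_apply,
        ContinuousLinearMap.sub_apply, ContinuousLinearMap.smul_apply, hFe₁, hAe₁, hAe₂,
        hEe₁, hEe₂, map_sub, map_smul, map_add, hFe₂]
      module
    rw [h1] at h2
    rcases smul_eq_zero.mp h2.symm with h3 | h3
    · rcases mul_eq_zero.mp h3 with h4 | h4
      · rcases mul_eq_zero.mp h4 with h5 | h5
        · norm_num at h5
        · exact hα (by exact_mod_cast h5)
      · exact ha' (pow_eq_zero_iff (by norm_num) |>.mp h4)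
    · exact he₁0 h3
end
end

section
/- Let H be a complex Hilbert space with dim H ≥ 3 and let φ : B_s(H) → B_s(H) be a surjective map such that for all A, B, C ∈ B_s(H), A − B ↔_c C if and only if φ(A) − φ(B) ↔_c φ(C). Then: (i) A ∈ ℝI if and only if φ(A) ∈ ℝI, for every A ∈ B_s(H); and (ii) for all A, B ∈ B_s(H), AB = BA if and only if φ(A)φ(B) = φ(B)φ(A). -/
noncomputable section

variable {H : Type*} [NormedAddCommGroup H] [InnerProductSpace ℂ H] [CompleteSpace H]

local notation "⟪" x ", " y "⟫" => @inner ℂ _ _ x y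

/-- The rank-one operator `y ↦ ⟪x, y⟫ • x` is self-adjoint. -/
lemma rankOne_selfAdjoint (x : H) :
    IsSelfAdjoint ((innerSL ℂ x).smulRight x) := by
  rw [ContinuousLinearMap.isSelfAdjoint_iff_isSymmetric]
  intro u v
  simp only [ContinuousLinearMap.coe_coe, ContinuousLinearMap.smulRight_apply, innerSL_apply_apply,
    inner_smul_left, inner_smul_right, inner_conj_symm]
  ring

/-- An operator commuting with all self-adjoint operators sends each vector into its span. -/
lemma eigen_of_comm (A : H →L[ℂ] H)
    (hcomm : ∀ B : selfAdjoint (H →L[ℂ] H), A * (B : H →L[ℂ] H) = (B : H →L[ℂ] H) * A)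
    (x : H) : ∃ c : ℂ, A x = c • x := by
  rcases eq_or_ne x 0 with rfl | hx
  · exact ⟨0, by simp⟩
  · have hB := hcomm ⟨(innerSL ℂ x).smulRight x, rankOne_selfAdjoint x⟩
    have h := congrArg (fun T : H →L[ℂ] H => T x) hB
    simp only [ContinuousLinearMap.mul_apply, ContinuousLinearMap.smulRight_apply,
      innerSL_apply_apply, map_smul] at h
    have hxx : ⟪x, x⟫ ≠ 0 := inner_self_ne_zero.mpr hx
    refine ⟨⟪x, x⟫⁻¹ * ⟪x, A x⟫, ?_⟩
    have h2 := congrArg (fun y => (⟪x, x⟫⁻¹ : ℂ) • y) h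
    simpa [smul_smul, inv_mul_cancel₀ hxx, hx] using h2

lemma scalar_of_comm_all (hdim : 3 ≤ Module.rank ℂ H)
    (A : selfAdjoint (H →L[ℂ] H))
    (hcomm : ∀ B : selfAdjoint (H →L[ℂ] H), CommC A B) :
    ∃ r : ℝ, (A : H →L[ℂ] H) = (r : ℂ) • 1 := by
  have hpos : 0 < Module.rank ℂ H := lt_of_lt_of_le (by norm_num) hdim
  obtain ⟨x₀, hx₀⟩ := rank_pos_iff_exists_ne_zero.mp hpos
  set T := (A : H →L[ℂ] H) with hT
  have heig : ∀ x : H, ∃ c : ℂ, T x = c • x := eigen_of_comm T (fun B => hcomm B)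
  obtain ⟨c₀, hc₀⟩ := heig x₀
  have huni : ∀ y : H, T y = c₀ • y := by
    intro y
    by_cases hy : ∃ a : ℂ, y = a • x₀
    · obtain ⟨a, rfl⟩ := hy
      rw [map_smul, hc₀, smul_comm]
    · obtain ⟨d, hd⟩ := heig y
      obtain ⟨e, he⟩ := heig (x₀ + y)
      rw [map_add, hc₀, hd] at he
      have key : (c₀ - e) • x₀ = (e - d) • y := by
        rw [smul_add] at he
        rw [sub_smul, sub_smul, sub_eq_sub_iff_add_eq_add, he, add_comm]
      have hed : e = d := by
        by_contra hne
        exact hy ⟨(e - d)⁻¹ * (c₀ - e), by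
          rw [mul_smul, key, smul_smul, inv_mul_cancel₀ (sub_ne_zero.mpr hne), one_smul]⟩
      rw [hed, sub_self, zero_smul] at key
      have hce : c₀ = d := by
        rcases smul_eq_zero.mp key with h | h
        · exact sub_eq_zero.mp h
        · exact absurd h hx₀
      rw [hd, hce]
  have hTeq : T = c₀ • 1 := by
    ext y; simpa using huni y
  have hsa : star T = T := A.2
  rw [hTeq, star_smul, star_one] at hsa
  have hconj : (starRingEnd ℂ) c₀ = c₀ := by
    have := congrArg (fun S : H →L[ℂ] H => S x₀) hsa
    simp only [ContinuousLinearMap.smul_apply, ContinuousLinearMap.one_apply] at this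
    exact smul_left_injective ℂ hx₀ this
  obtain ⟨r, hr⟩ : ∃ r : ℝ, c₀ = (r : ℂ) := ⟨c₀.re, (Complex.conj_eq_iff_re.mp hconj).symm⟩
  exact ⟨r, by rw [hTeq, hr]⟩

lemma commC_sub_right (A B : selfAdjoint (H →L[ℂ] H)) :
    CommC (A - B) B ↔ CommC A B := by
  unfold CommC
  rw [AddSubgroup.coe_sub, sub_mul, mul_sub, sub_left_inj]

theorem stmt12
    (hdim : 3 ≤ Module.rank ℂ H)
    (φ : selfAdjoint (H →L[ℂ] H) → selfAdjoint (H →L[ℂ] H))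
    (hsurj : Function.Surjective φ)
    (hpres : ∀ A B C : selfAdjoint (H →L[ℂ] H),
      CommC (A - B) C ↔ CommC (φ A - φ B) (φ C)) :
    (∀ A : selfAdjoint (H →L[ℂ] H),
      (∃ r : ℝ, (A : H →L[ℂ] H) = (r : ℂ) • 1) ↔
      (∃ r : ℝ, (φ A : H →L[ℂ] H) = (r : ℂ) • 1)) ∧
    (∀ A B : selfAdjoint (H →L[ℂ] H), CommC A B ↔ CommC (φ A) (φ B)) := by
  have key : ∀ A B : selfAdjoint (H →L[ℂ] H), CommC A B ↔ CommC (φ A) (φ B) := fun A B =>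
    (commC_sub_right A B).symm.trans ((hpres A B B).trans (commC_sub_right (φ A) (φ B)))
  have scal_iff : ∀ A : selfAdjoint (H →L[ℂ] H),
      (∃ r : ℝ, (A : H →L[ℂ] H) = (r : ℂ) • 1) ↔ ∀ B, CommC A B := by
    intro A
    constructor
    · rintro ⟨r, hr⟩ B
      unfold CommC
      rw [hr, smul_mul_assoc, mul_smul_comm, one_mul, mul_one]
    · exact scalar_of_comm_all hdim A
  refine ⟨fun A => ?_, key⟩
  rw [scal_iff A, scal_iff (φ A)]
  constructor
  · intro h B'
    obtain ⟨B, rfl⟩ := hsurj B'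
    exact (key A B).mp (h B)
  · intro h B
    exact (key A B).mpr (h (φ B))
end
end

section
/- Let H be a complex Hilbert space with dim H ≥ 3 and let φ : B_s(H) → B_s(H) be a surjective map such that for all A, B, C ∈ B_s(H), A − B ↔_c C if and only if φ(A) − φ(B) ↔_c φ(C). Then for all A, B ∈ B_s(H), (φ(A) − φ(B))^c = φ(A − B)^c and consequently (φ(A) − φ(B))^{cc} = φ(A − B)^{cc}. -/
/-!
If `φ Z = 0`, then `C - Z` commutes with `C` for every `C`, so `Z` is central; hence `0 - Z` is
central, and so is its image `φ 0 - φ Z = φ 0`. Consequently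
`A - B ↔_c C ⟺ φ (A - B) - φ 0 ↔_c φ C ⟺ φ (A - B) ↔_c φ C`, while by hypothesis
`A - B ↔_c C ⟺ φ A - φ B ↔_c φ C`; surjectivity of `φ` turns this into equality of commutants.
-/

noncomputable section

variable {H : Type*} [NormedAddCommGroup H] [InnerProductSpace ℂ H] [CompleteSpace H]

/-- `M^c`: the set of self-adjoint operators commuting with every member of `M`. -/
def CSet (M : Set (selfAdjoint (H →L[ℂ] H))) : Set (selfAdjoint (H →L[ℂ] H)) :=
  {X | ∀ T ∈ M, CommC X T}

/-- `M^{cc} = (M^c)^c`. -/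
def CCSet (M : Set (selfAdjoint (H →L[ℂ] H))) : Set (selfAdjoint (H →L[ℂ] H)) :=
  CSet (CSet M)

section Commutation

variable {A B C : selfAdjoint (H →L[ℂ] H)}

theorem CommC.refl (A : selfAdjoint (H →L[ℂ] H)) : CommC A A := rfl

theorem commC_zero_left (C : selfAdjoint (H →L[ℂ] H)) : CommC 0 C := by
  simp [CommC]

theorem CommC.symm (h : CommC A B) : CommC B A := Eq.symm h

theorem commC_comm : CommC A B ↔ CommC B A := ⟨CommC.symm, CommC.symm⟩

theorem CommC.add (hA : CommC A C) (hB : CommC B C) : CommC (A + B) C := by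
  unfold CommC at *
  push_cast
  rw [add_mul, mul_add, hA, hB]

theorem CommC.sub (hA : CommC A C) (hB : CommC B C) : CommC (A - B) C := by
  unfold CommC at *
  push_cast
  rw [sub_mul, mul_sub, hA, hB]

theorem commC_sub_left_iff (hB : CommC B C) : CommC (A - B) C ↔ CommC A C :=
  ⟨fun h => by simpa using h.add hB, fun h => h.sub hB⟩

theorem commC_sub_right_iff (hA : CommC A C) : CommC (A - B) C ↔ CommC B C :=
  ⟨fun h => by simpa using hA.sub h, hA.sub⟩

theorem mem_cSet_singleton {M X : selfAdjoint (H →L[ℂ] H)} : X ∈ CSet {M} ↔ CommC M X := by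
  simp only [CSet, Set.mem_ofPred_eq, Set.mem_singleton_iff, forall_eq, commC_comm]

end Commutation

section DifferenceCommutativityPreserver

variable {φ : selfAdjoint (H →L[ℂ] H) → selfAdjoint (H →L[ℂ] H)}
  (hpres : ∀ A B C : selfAdjoint (H →L[ℂ] H), CommC (A - B) C ↔ CommC (φ A - φ B) (φ C))
include hpres

theorem commC_of_map_eq_zero {Z : selfAdjoint (H →L[ℂ] H)} (hZ : φ Z = 0)
    (C : selfAdjoint (H →L[ℂ] H)) : CommC Z C := by
  have hCZ : CommC (C - Z) C := (hpres C Z C).mpr (by simpa [hZ] using CommC.refl (φ C))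
  exact (commC_sub_right_iff (CommC.refl C)).mp hCZ

theorem commC_map_zero (hsurj : Function.Surjective φ) (C : selfAdjoint (H →L[ℂ] H)) :
    CommC (φ 0) (φ C) := by
  obtain ⟨Z, hZ⟩ := hsurj 0
  have hneg : CommC (0 - Z) C := (commC_zero_left C).sub (commC_of_map_eq_zero hpres hZ C)
  simpa [hZ] using (hpres 0 Z C).mp hneg

theorem commC_map_iff (hsurj : Function.Surjective φ) (D C : selfAdjoint (H →L[ℂ] H)) :
    CommC (φ D) (φ C) ↔ CommC D C := by
  rw [← commC_sub_left_iff (commC_map_zero hpres hsurj C), ← hpres, sub_zero]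

end DifferenceCommutativityPreserver

theorem stmt13_general
    (φ : selfAdjoint (H →L[ℂ] H) → selfAdjoint (H →L[ℂ] H))
    (hsurj : Function.Surjective φ)
    (hpres : ∀ A B C : selfAdjoint (H →L[ℂ] H),
      CommC (A - B) C ↔ CommC (φ A - φ B) (φ C)) :
    ∀ A B : selfAdjoint (H →L[ℂ] H),
      CSet {φ A - φ B} = CSet {φ (A - B)} ∧
      CCSet {φ A - φ B} = CCSet {φ (A - B)} := by
  intro A B
  have hcomm : CSet {φ A - φ B} = CSet {φ (A - B)} := by
    ext X
    obtain ⟨C, rfl⟩ := hsurj X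
    rw [mem_cSet_singleton, mem_cSet_singleton, ← hpres, commC_map_iff hpres hsurj]
  exact ⟨hcomm, by rw [CCSet, CCSet, hcomm]⟩

theorem stmt13
    (hdim : 3 ≤ Module.rank ℂ H)
    (φ : selfAdjoint (H →L[ℂ] H) → selfAdjoint (H →L[ℂ] H))
    (hsurj : Function.Surjective φ)
    (hpres : ∀ A B C : selfAdjoint (H →L[ℂ] H),
      CommC (A - B) C ↔ CommC (φ A - φ B) (φ C)) :
    ∀ A B : selfAdjoint (H →L[ℂ] H),
      CSet {φ A - φ B} = CSet {φ (A - B)} ∧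
      CCSet {φ A - φ B} = CCSet {φ (A - B)} :=
  stmt13_general φ hsurj hpres
end
end

section
/- Let H be a complex Hilbert space with dim H ≥ 3 and let φ : B_s(H) → B_s(H) be a surjective map such that for all A, B, C ∈ B_s(H), A − B ↔_c C if and only if φ(A) − φ(B) ↔_c φ(C). Then for all A, B ∈ B_s(H), A − B ∈ ℝI if and only if φ(A) − φ(B) ∈ ℝI; in particular, if φ(A) = φ(B) then A − B ∈ ℝI. -/
/-!
An operator commuting with every self-adjoint operator commutes with every operator, since each
operator is `ℜ T + i ℑ T`; so it lies in the centre `ℂ • 1` of `B(H)`, and being self-adjoint it is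
a real multiple of the identity. Since `φ` is onto, the hypothesis with `C` ranging over `B_s(H)`
says that `A - B` commutes with all of `B_s(H)` if and only if `φ A - φ B` does.
-/

noncomputable section

variable {H : Type*} [NormedAddCommGroup H] [InnerProductSpace ℂ H] [CompleteSpace H]

section StarAlgebra

open ComplexStarModule

variable {A : Type*} [Ring A] [StarRing A] [Algebra ℂ A] [StarModule ℂ A]

theorem commute_of_forall_selfAdjoint_commute {a : A}
    (h : ∀ c : selfAdjoint A, Commute a c) (b : A) : Commute a b := by
  rw [← realPart_add_I_smul_imaginaryPart b]
  exact (h _).add_right ((h _).smul_right Complex.I)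

theorem IsSelfAdjoint.exists_real_of_eq_smul_one {a : A} (ha : IsSelfAdjoint a) {c : ℂ}
    (hc : a = c • 1) : ∃ r : ℝ, a = (r : ℂ) • 1 := by
  refine ⟨c.re, ?_⟩
  calc a = ℜ a := ha.coe_realPart.symm
    _ = c.re • (1 : A) := by simp [hc, realPart_smul, (IsSelfAdjoint.one A).imaginaryPart]
    _ = (c.re : ℂ) • 1 := (Complex.coe_smul _ _).symm

theorem IsSelfAdjoint.forall_selfAdjoint_commute_iff [Algebra.IsCentral ℂ A] {a : A}
    (ha : IsSelfAdjoint a) :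
    (∀ c : selfAdjoint A, Commute a c) ↔ ∃ r : ℝ, a = (r : ℂ) • 1 := by
  refine ⟨fun h => ?_, ?_⟩
  · have hcenter : a ∈ Subalgebra.center ℂ A :=
      Subalgebra.mem_center_iff.mpr fun b => (commute_of_forall_selfAdjoint_commute h b).eq.symm
    rw [Algebra.IsCentral.center_eq_bot, Algebra.mem_bot] at hcenter
    obtain ⟨c, rfl⟩ := hcenter
    exact ha.exists_real_of_eq_smul_one (Algebra.algebraMap_eq_smul_one c)
  · rintro ⟨r, rfl⟩ c
    exact (Commute.one_left _).smul_left _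

end StarAlgebra

theorem forall_commC_iff (a : selfAdjoint (H →L[ℂ] H)) :
    (∀ C, CommC a C) ↔ ∃ r : ℝ, (a : H →L[ℂ] H) = (r : ℂ) • 1 :=
  a.2.forall_selfAdjoint_commute_iff

theorem stmt14_general
    (φ : selfAdjoint (H →L[ℂ] H) → selfAdjoint (H →L[ℂ] H))
    (hsurj : Function.Surjective φ)
    (hpres : ∀ A B C : selfAdjoint (H →L[ℂ] H),
      CommC (A - B) C ↔ CommC (φ A - φ B) (φ C)) :
    ∀ A B : selfAdjoint (H →L[ℂ] H),
      ((∃ r : ℝ, ((A - B : selfAdjoint (H →L[ℂ] H)) : H →L[ℂ] H) = (r : ℂ) • 1) ↔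
       (∃ r : ℝ, ((φ A - φ B : selfAdjoint (H →L[ℂ] H)) : H →L[ℂ] H) = (r : ℂ) • 1)) ∧
      (φ A = φ B →
        ∃ r : ℝ, ((A - B : selfAdjoint (H →L[ℂ] H)) : H →L[ℂ] H) = (r : ℂ) • 1) := by
  have hscalar : ∀ A B : selfAdjoint (H →L[ℂ] H),
      (∃ r : ℝ, ((A - B : selfAdjoint (H →L[ℂ] H)) : H →L[ℂ] H) = (r : ℂ) • 1) ↔
      (∃ r : ℝ, ((φ A - φ B : selfAdjoint (H →L[ℂ] H)) : H →L[ℂ] H) = (r : ℂ) • 1) := by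
    intro A B
    rw [← forall_commC_iff, ← forall_commC_iff]
    exact (forall_congr' (hpres A B)).trans hsurj.forall.symm
  refine fun A B => ⟨hscalar A B, fun hAB => (hscalar A B).mpr ⟨0, ?_⟩⟩
  simp [hAB]

theorem stmt14
    (hdim : 3 ≤ Module.rank ℂ H)
    (φ : selfAdjoint (H →L[ℂ] H) → selfAdjoint (H →L[ℂ] H))
    (hsurj : Function.Surjective φ)
    (hpres : ∀ A B C : selfAdjoint (H →L[ℂ] H),
      CommC (A - B) C ↔ CommC (φ A - φ B) (φ C)) :
    ∀ A B : selfAdjoint (H →L[ℂ] H),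
      ((∃ r : ℝ, ((A - B : selfAdjoint (H →L[ℂ] H)) : H →L[ℂ] H) = (r : ℂ) • 1) ↔
       (∃ r : ℝ, ((φ A - φ B : selfAdjoint (H →L[ℂ] H)) : H →L[ℂ] H) = (r : ℂ) • 1)) ∧
      (φ A = φ B →
        ∃ r : ℝ, ((A - B : selfAdjoint (H →L[ℂ] H)) : H →L[ℂ] H) = (r : ℂ) • 1) :=
  stmt14_general φ hsurj hpres
end
end
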